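/- Let M be an invertible Hermitian indefinite matrix with smallest positive eigenvalue τ₊ and largest negative eigenvalue τ₋. The matrix M̃ = (1-λ)M + λM² is positive definite if and only if λ > 1/(1-τ₋), and additionally λ < 1/(1-τ₊) when τ₊ < 1. -/

import Mathlib

/-!
Diagonalising `M = U D U*` turns `(1-λ)M + λM²` into `U f(D) U*` with `f(t) = (1-λ)t + λt²`, so it is
positive definite iff `f` is positive at every eigenvalue. Since `f(t) = t(1 - λ(1-t))`, at `t < 0`
this means `λ > 1/(1-t)`, at `0 < t < 1` it means `λ < 1/(1-t)`, and at `t ≥ 1` it holds for every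
`λ ≥ 0`. The bound `1/(1-t)` increases with `t`, so the binding eigenvalues are `τ₋` and `τ₊`;
invertibility excludes the eigenvalue `0`, where `f` vanishes.
-/

open Matrix
open scoped ComplexOrder

namespace Matrix.IsHermitian

variable {ι 𝕜 : Type*} [Fintype ι] [DecidableEq ι] [RCLike 𝕜] {A : Matrix ι ι 𝕜}

lemma eigenvalues_ne_zero_of_isUnit (hA : A.IsHermitian) (hunit : IsUnit A) (i : ι) :
    hA.eigenvalues i ≠ 0 := by
  have hdet := ((isUnit_iff_isUnit_det A).mp hunit).ne_zero
  rw [hA.det_eq_prod_eigenvalues, Finset.prod_ne_zero_iff] at hdet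
  exact_mod_cast hdet i (Finset.mem_univ i)

lemma smul_add_smul_mul_self_eq (hA : A.IsHermitian) (a b : ℝ) :
    (a : 𝕜) • A + (b : 𝕜) • (A * A) =
      Unitary.conjStarAlgAut 𝕜 _ hA.eigenvectorUnitary
        (diagonal fun i ↦ ((a * hA.eigenvalues i + b * hA.eigenvalues i ^ 2 : ℝ) : 𝕜)) := by
  conv_lhs => rw [hA.spectral_theorem]
  rw [← map_mul, ← map_smul, ← map_smul, ← map_add, diagonal_mul_diagonal, ← diagonal_smul,
    ← diagonal_smul, diagonal_add]
  congr 2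
  ext i
  simp only [Pi.smul_apply, Function.comp_apply, smul_eq_mul]
  push_cast
  ring

lemma posDef_smul_add_smul_mul_self_iff (hA : A.IsHermitian) (a b : ℝ) :
    ((a : 𝕜) • A + (b : 𝕜) • (A * A)).PosDef ↔
      ∀ i, 0 < a * hA.eigenvalues i + b * hA.eigenvalues i ^ 2 := by
  rw [hA.smul_add_smul_mul_self_eq, Unitary.conjStarAlgAut_apply,
    IsUnit.posDef_star_right_conjugate_iff (Unitary.isUnit_coe), posDef_diagonal_iff]
  simp only [RCLike.ofReal_pos]

end Matrix.IsHermitian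

lemma one_sub_mul_add_mul_sq_pos_iff_of_neg {lam t : ℝ} (ht : t < 0) :
    0 < (1 - lam) * t + lam * t ^ 2 ↔ 1 / (1 - t) < lam := by
  rw [show (1 - lam) * t + lam * t ^ 2 = -t * (lam * (1 - t) - 1) by ring,
    mul_pos_iff_of_pos_left (neg_pos.mpr ht), sub_pos, div_lt_iff₀ (by linarith), mul_comm]

lemma one_sub_mul_add_mul_sq_pos_iff_of_pos_of_lt_one {lam t : ℝ} (ht₀ : 0 < t) (ht₁ : t < 1) :
    0 < (1 - lam) * t + lam * t ^ 2 ↔ lam < 1 / (1 - t) := by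
  rw [show (1 - lam) * t + lam * t ^ 2 = t * (1 - lam * (1 - t)) by ring,
    mul_pos_iff_of_pos_left ht₀, sub_pos, lt_div_iff₀ (by linarith)]

lemma one_sub_mul_add_mul_sq_pos_of_one_le {lam t : ℝ} (hlam : 0 ≤ lam) (ht : 1 ≤ t) :
    0 < (1 - lam) * t + lam * t ^ 2 := by
  rw [show (1 - lam) * t + lam * t ^ 2 = t + lam * (t * (t - 1)) by ring]
  have := mul_nonneg hlam (mul_nonneg (by linarith : (0 : ℝ) ≤ t) (sub_nonneg.mpr ht))
  linarith

theorem forall_one_sub_mul_add_mul_sq_pos_iff {ι : Type*} (e : ι → ℝ) (he : ∀ i, e i ≠ 0)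
    (τp τm : ℝ) (hτp : 0 < τp) (hτm : τm < 0)
    (hmemp : ∃ i, e i = τp) (hminp : ∀ i, 0 < e i → τp ≤ e i)
    (hmemm : ∃ i, e i = τm) (hmaxm : ∀ i, e i < 0 → e i ≤ τm) (lam : ℝ) :
    (∀ i, 0 < (1 - lam) * e i + lam * e i ^ 2) ↔
      (1 / (1 - τm) < lam ∧ (τp < 1 → lam < 1 / (1 - τp))) := by
  obtain ⟨ip, rfl⟩ := hmemp
  obtain ⟨im, rfl⟩ := hmemm
  constructor
  · intro h
    exact ⟨(one_sub_mul_add_mul_sq_pos_iff_of_neg hτm).mp (h im),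
      fun hτp₁ ↦ (one_sub_mul_add_mul_sq_pos_iff_of_pos_of_lt_one hτp hτp₁).mp (h ip)⟩
  · rintro ⟨hlam_gt, hlam_lt⟩ i
    rcases (he i).lt_or_gt with hneg | hpos
    · rw [one_sub_mul_add_mul_sq_pos_iff_of_neg hneg]
      calc 1 / (1 - e i) ≤ 1 / (1 - e im) :=
            one_div_le_one_div_of_le (by linarith) (by linarith [hmaxm i hneg])
        _ < lam := hlam_gt
    rcases lt_or_ge (e i) 1 with hlt | hge
    · rw [one_sub_mul_add_mul_sq_pos_iff_of_pos_of_lt_one hpos hlt]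
      have hτp_le := hminp i hpos
      calc lam < 1 / (1 - e ip) := hlam_lt (hτp_le.trans_lt hlt)
        _ ≤ 1 / (1 - e i) := one_div_le_one_div_of_le (by linarith) (by linarith)
    · have hlam : 0 < lam := lt_trans (by rw [one_div_pos]; linarith) hlam_gt
      exact one_sub_mul_add_mul_sq_pos_of_one_le hlam.le hge

/-- For an invertible Hermitian indefinite `M`, `M̃ = (1-λ)M + λM²` is positive
definite iff `λ > 1/(1-τ₋)` and additionally `λ < 1/(1-τ₊)` when `τ₊ < 1`. -/
theorem bdmc_stmt2 (n : ℕ) (M : Matrix (Fin n) (Fin n) ℂ) (hM : M.IsHermitian)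
    (hinv : IsUnit M) (τp τm : ℝ) (hτp : 0 < τp) (hτm : τm < 0)
    (hmemp : ∃ i, hM.eigenvalues i = τp)
    (hminp : ∀ i, 0 < hM.eigenvalues i → τp ≤ hM.eigenvalues i)
    (hmemm : ∃ i, hM.eigenvalues i = τm)
    (hmaxm : ∀ i, hM.eigenvalues i < 0 → hM.eigenvalues i ≤ τm)
    (lam : ℝ) :
    (((1 - lam : ℝ) : ℂ) • M + (lam : ℂ) • (M * M)).PosDef ↔
      (1 / (1 - τm) < lam ∧ (τp < 1 → lam < 1 / (1 - τp))) :=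
  (hM.posDef_smul_add_smul_mul_self_iff _ _).trans <|
    forall_one_sub_mul_add_mul_sq_pos_iff _ (hM.eigenvalues_ne_zero_of_isUnit hinv) τp τm hτp hτm
      hmemp hminp hmemm hmaxm lam
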